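/- arXiv:1203.1209 — 4 statements merged into one kernel-verified Lean document; each statement's English description precedes it below -/
import Mathlib

section
/- Let N ≥ 2, h > 0, and let L₋, L₊ : ℝ³ × ℝ₊* → ℝ be C¹ Lagrangians. Define the discrete Lagrangian functional L^T(Q) = h ∑_{p=1}^{N} L₋(Q_p, (Δ₋Q)_p, t_p, h) + h ∑_{p=0}^{N-1} L₊(Q_p, (-Δ₊Q)_p, t_p, h) on ℝ^{N+1}, where t_p = t_0 + p·h. Then Q ∈ ℝ^{N+1} satisfies D L^T(Q)(W) = 0 for all W ∈ ℝ^{N+1} with W_0 = W_N = 0 if and only if for all p = 1,…,N-1: ∂L₋/∂x(Q_p,(Δ₋Q)_p,t_p,h) + ∂L₊/∂x(Q_p,(-Δ₊Q)_p,t_p,h) + (Δ₊(∂L₋/∂v(Q,Δ₋Q,T,h)))_p − (Δ₋(∂L₊/∂v(Q,-Δ₊Q,T,h)))_p = 0. -/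
/-- Backward difference `(Δ₋ Q)_p = (Q_p - Q_{p-1})/h`. -/
noncomputable def bD (h : ℝ) (Q : ℕ → ℝ) (p : ℕ) : ℝ := (Q p - Q (p - 1)) / h

/-- Minus forward difference `(-Δ₊ Q)_p = (Q_{p+1} - Q_p)/h`. -/
noncomputable def fD (h : ℝ) (Q : ℕ → ℝ) (p : ℕ) : ℝ := (Q (p + 1) - Q p) / h

/-!
The variation of `L^T` in a direction `W` is a sum of the partial derivatives of `L₋` and `L₊`
weighted by `W_p` and by the difference quotients of `W`. Summation by parts moves the
differences onto the `∂/∂v` terms; once `W_0 = W_N = 0` kills the boundary terms, the variation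
is `h ∑_{p=1}^{N-1} EL_p W_p`, with `EL_p` the discrete Euler-Lagrange expression. Testing with
the indicator of a single interior node shows that this vanishes for all such `W` exactly when
every `EL_p` does.
-/

open Finset

lemma bD_add_mul (h : ℝ) (Q W : ℕ → ℝ) (s : ℝ) (p : ℕ) :
    bD h (fun i => Q i + s * W i) p = bD h Q p + s * bD h W p := by
  simp only [bD]; ring

lemma fD_add_mul (h : ℝ) (Q W : ℕ → ℝ) (s : ℝ) (p : ℕ) :
    fD h (fun i => Q i + s * W i) p = fD h Q p + s * fD h W p := by
  simp only [fD]; ring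

lemma hasDerivAt_comp_add_mul {f : ℝ → ℝ → ℝ} {x y : ℝ}
    (hf : DifferentiableAt ℝ (Function.uncurry f) (x, y)) (a b : ℝ) :
    HasDerivAt (fun s => f (x + s * a) (y + s * b))
      (a * deriv (f · y) x + b * deriv (f x ·) y) 0 := by
  set F' := fderiv ℝ (Function.uncurry f) (x, y)
  have hline : HasDerivAt (fun s : ℝ => (x + s * a, y + s * b)) (a, b) 0 :=
    ((hasDerivAt_mul_const a).const_add x).prodMk ((hasDerivAt_mul_const b).const_add y)
  have hx : deriv (f · y) x = F' (1, 0) :=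
    (HasFDerivAt.comp_hasDerivAt (l := Function.uncurry f) x hf.hasFDerivAt
      ((hasDerivAt_id' x).prodMk (hasDerivAt_const x y))).deriv
  have hy : deriv (f x ·) y = F' (0, 1) :=
    (HasFDerivAt.comp_hasDerivAt (l := Function.uncurry f) y hf.hasFDerivAt
      ((hasDerivAt_const y x).prodMk (hasDerivAt_id' y))).deriv
  have hab : ((a, b) : ℝ × ℝ) = a • (1, 0) + b • (0, 1) := by simp
  rw [hx, hy, ← smul_eq_mul, ← smul_eq_mul, ← map_smul, ← map_smul, ← map_add, ← hab]
  exact hf.hasFDerivAt.comp_hasDerivAt_of_eq 0 hline (by simp)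

lemma differentiable_uncurry_slice {L : ℝ → ℝ → ℝ → ℝ → ℝ}
    (hL : Differentiable ℝ (fun v : ℝ × ℝ × ℝ × ℝ => L v.1 v.2.1 v.2.2.1 v.2.2.2))
    (t k : ℝ) : Differentiable ℝ (Function.uncurry fun x v => L x v t k) :=
  hL.comp (f := fun z : ℝ × ℝ => (z.1, z.2, t, k)) (by fun_prop)

lemma sum_Icc_mul_sub_pred (B W : ℕ → ℝ) (M : ℕ) :
    ∑ p ∈ Icc 1 (M + 1), B p * (W p - W (p - 1)) =
      ∑ p ∈ Icc 1 M, (B p - B (p + 1)) * W p + B (M + 1) * W (M + 1) - B 1 * W 0 := by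
  induction M with
  | zero => simp; ring
  | succ M ih =>
    rw [sum_Icc_succ_top (by omega), ih, sum_Icc_succ_top (by omega), Nat.add_sub_cancel]
    ring

lemma sum_range_mul_succ_sub (D W : ℕ → ℝ) (M : ℕ) :
    ∑ p ∈ range (M + 1), D p * (W (p + 1) - W p) =
      ∑ p ∈ Icc 1 M, (D (p - 1) - D p) * W p + D M * W (M + 1) - D 0 * W 0 := by
  induction M with
  | zero => simp; ring
  | succ M ih =>
    rw [sum_range_succ, ih, sum_Icc_succ_top (by omega), Nat.add_sub_cancel]
    ring

lemma sum_range_succ_eq_add_sum_Icc (f : ℕ → ℝ) (M : ℕ) :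
    ∑ p ∈ range (M + 1), f p = f 0 + ∑ p ∈ Icc 1 M, f p := by
  rw [range_eq_Ico, sum_eq_sum_Ico_succ_bot (by omega), Ico_add_one_right_eq_Icc]

lemma first_variation_eq_sum_mul {h : ℝ} (hh : h ≠ 0) {N : ℕ} {W : ℕ → ℝ}
    (hW0 : W 0 = 0) (hWN : W N = 0) (A B C D : ℕ → ℝ) :
    h * ∑ p ∈ Icc 1 N, (W p * A p + bD h W p * B p)
        + h * ∑ p ∈ range N, (W p * C p + fD h W p * D p)
      = h * ∑ p ∈ Icc 1 (N - 1),
          (A p + C p + (B p - B (p + 1)) / h - (D p - D (p - 1)) / h) * W p := by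
  cases N with
  | zero => simp
  | succ M =>
    have hbD : h * ∑ p ∈ Icc 1 (M + 1), (W p * A p + bD h W p * B p)
        = ∑ p ∈ Icc 1 M, (h * A p + (B p - B (p + 1))) * W p := by
      rw [mul_sum, sum_congr rfl fun p _ => show h * (W p * A p + bD h W p * B p)
          = h * A p * W p + B p * (W p - W (p - 1)) by unfold bD; field_simp,
        sum_add_distrib, sum_Icc_mul_sub_pred, sum_Icc_succ_top (by omega), hW0, hWN]
      simp only [add_mul, sum_add_distrib]
      ring
    have hfD : h * ∑ p ∈ range (M + 1), (W p * C p + fD h W p * D p)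
        = ∑ p ∈ Icc 1 M, (h * C p + (D (p - 1) - D p)) * W p := by
      rw [mul_sum, sum_congr rfl fun p _ => show h * (W p * C p + fD h W p * D p)
          = h * C p * W p + D p * (W (p + 1) - W p) by unfold fD; field_simp,
        sum_add_distrib, sum_range_mul_succ_sub, sum_range_succ_eq_add_sum_Icc, hW0, hWN]
      simp only [add_mul, sum_add_distrib]
      ring
    rw [hbD, hfD, Nat.add_sub_cancel, mul_sum, ← sum_add_distrib]
    refine sum_congr rfl fun p _ => ?_
    field_simp
    ring

lemma forall_sum_Icc_mul_eq_zero_iff (N : ℕ) (E : ℕ → ℝ) :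
    (∀ W : ℕ → ℝ, W 0 = 0 → W N = 0 → ∑ p ∈ Icc 1 (N - 1), E p * W p = 0)
      ↔ ∀ p ∈ Icc 1 (N - 1), E p = 0 := by
  refine ⟨fun hE p hp => ?_, fun hE W _ _ => sum_eq_zero fun p hp => by rw [hE p hp, zero_mul]⟩
  obtain ⟨hp1, hpN⟩ := mem_Icc.1 hp
  have hW0 : Pi.single (M := fun _ => ℝ) p 1 0 = 0 := Pi.single_eq_of_ne (by omega) _
  have hWN : Pi.single (M := fun _ => ℝ) p 1 N = 0 := Pi.single_eq_of_ne (by omega) _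
  simpa [Pi.single_apply, hp] using hE _ hW0 hWN

section Lagrangian

variable (L Lm Lp : ℝ → ℝ → ℝ → ℝ → ℝ) (h t0 : ℝ)

noncomputable def partialX (Q V : ℕ → ℝ) (p : ℕ) : ℝ :=
  deriv (fun x => L x (V p) (t0 + p * h) h) (Q p)

noncomputable def partialV (Q V : ℕ → ℝ) (p : ℕ) : ℝ :=
  deriv (fun v => L (Q p) v (t0 + p * h) h) (V p)

noncomputable def discreteAction (N : ℕ) (Q : ℕ → ℝ) : ℝ :=
  h * ∑ p ∈ Icc 1 N, Lm (Q p) (bD h Q p) (t0 + p * h) h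
    + h * ∑ p ∈ range N, Lp (Q p) (fD h Q p) (t0 + p * h) h

noncomputable def discreteEulerLagrange (Q : ℕ → ℝ) (p : ℕ) : ℝ :=
  partialX Lm h t0 Q (bD h Q) p + partialX Lp h t0 Q (fD h Q) p
    + (partialV Lm h t0 Q (bD h Q) p - partialV Lm h t0 Q (bD h Q) (p + 1)) / h
    - (partialV Lp h t0 Q (fD h Q) p - partialV Lp h t0 Q (fD h Q) (p - 1)) / h

variable {L Lm Lp h t0}

lemma hasDerivAt_sum_lagrangian
    (hL : Differentiable ℝ (fun v : ℝ × ℝ × ℝ × ℝ => L v.1 v.2.1 v.2.2.1 v.2.2.2))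
    (S : Finset ℕ) (vel : (ℕ → ℝ) → ℕ → ℝ) (Q W : ℕ → ℝ)
    (hvel : ∀ s p, vel (fun i => Q i + s * W i) p = vel Q p + s * vel W p) :
    HasDerivAt
      (fun s => ∑ p ∈ S, L (Q p + s * W p) (vel (fun i => Q i + s * W i) p) (t0 + p * h) h)
      (∑ p ∈ S, (W p * partialX L h t0 Q (vel Q) p + vel W p * partialV L h t0 Q (vel Q) p))
      0 := by
  refine HasDerivAt.fun_sum fun p _ => ?_
  simp_rw [hvel]
  exact hasDerivAt_comp_add_mul (differentiable_uncurry_slice hL _ _ _) _ _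

lemma hasDerivAt_discreteAction
    (hLm : Differentiable ℝ (fun v : ℝ × ℝ × ℝ × ℝ => Lm v.1 v.2.1 v.2.2.1 v.2.2.2))
    (hLp : Differentiable ℝ (fun v : ℝ × ℝ × ℝ × ℝ => Lp v.1 v.2.1 v.2.2.1 v.2.2.2))
    (N : ℕ) (Q W : ℕ → ℝ) :
    HasDerivAt (fun s => discreteAction Lm Lp h t0 N (fun i => Q i + s * W i))
      (h * ∑ p ∈ Icc 1 N,
          (W p * partialX Lm h t0 Q (bD h Q) p + bD h W p * partialV Lm h t0 Q (bD h Q) p)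
        + h * ∑ p ∈ range N,
          (W p * partialX Lp h t0 Q (fD h Q) p + fD h W p * partialV Lp h t0 Q (fD h Q) p)) 0 :=
  ((hasDerivAt_sum_lagrangian hLm _ _ Q W (bD_add_mul h Q W)).const_mul h).add
    ((hasDerivAt_sum_lagrangian hLp _ _ Q W (fD_add_mul h Q W)).const_mul h)

lemma deriv_discreteAction_eq
    (hLm : Differentiable ℝ (fun v : ℝ × ℝ × ℝ × ℝ => Lm v.1 v.2.1 v.2.2.1 v.2.2.2))
    (hLp : Differentiable ℝ (fun v : ℝ × ℝ × ℝ × ℝ => Lp v.1 v.2.1 v.2.2.1 v.2.2.2))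
    (hh : h ≠ 0) {N : ℕ} (Q : ℕ → ℝ) {W : ℕ → ℝ} (hW0 : W 0 = 0) (hWN : W N = 0) :
    deriv (fun s => discreteAction Lm Lp h t0 N (fun i => Q i + s * W i)) 0
      = h * ∑ p ∈ Icc 1 (N - 1), discreteEulerLagrange Lm Lp h t0 Q p * W p := by
  rw [(hasDerivAt_discreteAction hLm hLp N Q W).deriv, first_variation_eq_sum_mul hh hW0 hWN]
  rfl

end Lagrangian

theorem discrete_euler_lagrange_general (N : ℕ) (h : ℝ) (hh : 0 < h) (t0 : ℝ)
    (Lm Lp : ℝ → ℝ → ℝ → ℝ → ℝ)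
    (hLm : ContDiff ℝ 1 (fun v : ℝ × ℝ × ℝ × ℝ => Lm v.1 v.2.1 v.2.2.1 v.2.2.2))
    (hLp : ContDiff ℝ 1 (fun v : ℝ × ℝ × ℝ × ℝ => Lp v.1 v.2.1 v.2.2.1 v.2.2.2))
    (Q : ℕ → ℝ) :
    (∀ W : ℕ → ℝ, W 0 = 0 → W N = 0 →
      deriv (fun s : ℝ =>
        h * ∑ p ∈ Finset.Icc 1 N,
              Lm (Q p + s * W p) (bD h (fun i => Q i + s * W i) p) (t0 + p * h) h
        + h * ∑ p ∈ Finset.range N,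
              Lp (Q p + s * W p) (fD h (fun i => Q i + s * W i) p) (t0 + p * h) h) 0 = 0)
    ↔ (∀ p ∈ Finset.Icc 1 (N - 1),
        deriv (fun x => Lm x (bD h Q p) (t0 + p * h) h) (Q p)
        + deriv (fun x => Lp x (fD h Q p) (t0 + p * h) h) (Q p)
        + (deriv (fun v => Lm (Q p) v (t0 + p * h) h) (bD h Q p)
            - deriv (fun v => Lm (Q (p + 1)) v (t0 + (p + 1 : ℕ) * h) h) (bD h Q (p + 1))) / h
        - (deriv (fun v => Lp (Q p) v (t0 + p * h) h) (fD h Q p)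
            - deriv (fun v => Lp (Q (p - 1)) v (t0 + ((p : ℝ) - 1) * h) h) (fD h Q (p - 1))) / h
        = 0) := by
  refine (forall₃_congr fun W hW0 hWN => ?_).trans
    ((forall_sum_Icc_mul_eq_zero_iff N (discreteEulerLagrange Lm Lp h t0 Q)).trans
      (forall₂_congr fun p hp => ?_))
  · have hvar := deriv_discreteAction_eq (t0 := t0) (hLm.differentiable one_ne_zero)
      (hLp.differentiable one_ne_zero) hh.ne' Q hW0 hWN
    exact (Eq.congr_left hvar).trans (mul_eq_zero.trans (or_iff_right hh.ne'))
  -- the statement writes `t_{p-1}` with real subtraction, `discreteEulerLagrange` with `ℕ`'s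
  · rw [← Nat.cast_pred (mem_Icc.1 hp).1]
    rfl

/-- Discrete Euler-Lagrange characterization of discrete critical points. -/
theorem discrete_euler_lagrange (N : ℕ) (hN : 2 ≤ N) (h : ℝ) (hh : 0 < h) (t0 : ℝ)
    (Lm Lp : ℝ → ℝ → ℝ → ℝ → ℝ)
    (hLm : ContDiff ℝ 1 (fun v : ℝ × ℝ × ℝ × ℝ => Lm v.1 v.2.1 v.2.2.1 v.2.2.2))
    (hLp : ContDiff ℝ 1 (fun v : ℝ × ℝ × ℝ × ℝ => Lp v.1 v.2.1 v.2.2.1 v.2.2.2))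
    (Q : ℕ → ℝ) :
    (∀ W : ℕ → ℝ, W 0 = 0 → W N = 0 →
      deriv (fun s : ℝ =>
        h * ∑ p ∈ Finset.Icc 1 N,
              Lm (Q p + s * W p) (bD h (fun i => Q i + s * W i) p) (t0 + p * h) h
        + h * ∑ p ∈ Finset.range N,
              Lp (Q p + s * W p) (fD h (fun i => Q i + s * W i) p) (t0 + p * h) h) 0 = 0)
    ↔ (∀ p ∈ Finset.Icc 1 (N - 1),
        deriv (fun x => Lm x (bD h Q p) (t0 + p * h) h) (Q p)
        + deriv (fun x => Lp x (fD h Q p) (t0 + p * h) h) (Q p)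
        + (deriv (fun v => Lm (Q p) v (t0 + p * h) h) (bD h Q p)
            - deriv (fun v => Lm (Q (p + 1)) v (t0 + (p + 1 : ℕ) * h) h) (bD h Q (p + 1))) / h
        - (deriv (fun v => Lp (Q p) v (t0 + p * h) h) (fD h Q p)
            - deriv (fun v => Lp (Q (p - 1)) v (t0 + ((p : ℝ) - 1) * h) h) (fD h Q (p - 1))) / h
        = 0) :=
  discrete_euler_lagrange_general N h hh t0 Lm Lp hLm hLp Q
end

section
/- Let h > 0, N ≥ 4 and P̄ : ℝ⁵ × ℝ₊* → ℝ be C¹, with associated second order finite differences operator P^T_p(Q) = P̄(Q_p,(Δ₋Q)_p,(-Δ₊Q)_p,(-Δ₊∘Δ₋Q)_p,t_p,h). For Q ∈ ℝ^{N+1}, the Fréchet derivative DP^T(Q) is self-adjoint (i.e. h∑_{p=1}^{N-1} DP^T_p(Q)(W) Z_p = h∑_{p=1}^{N-1} DP^T_p(Q)(Z) W_p for all W, Z ∈ ℝ^{N+1} vanishing at indices 0, 1, N-1, N) for all Q and all admissible partitions if and only if P̄ satisfies the discrete Helmholtz condition: for all admissible Q and all p = 2,…,N-1, (Δ₋ (∂P̄/∂w(⋆)))_p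 = ∂P̄/∂v₋(⋆_p) + ∂P̄/∂v₊(⋆_{p-1}). -/
/-- Centered second difference `(-Δ₊ ∘ Δ₋ Q)_p = (Q_{p+1} - 2Q_p + Q_{p-1})/h²`. -/
noncomputable def cD (h : ℝ) (Q : ℕ → ℝ) (p : ℕ) : ℝ :=
  (Q (p + 1) - 2 * Q p + Q (p - 1)) / h ^ 2

/-- Componentwise Fréchet derivative of the finite differences operator
associated to `P` at `Q` in direction `W`. -/
noncomputable def DP (P : ℝ → ℝ → ℝ → ℝ → ℝ → ℝ → ℝ) (h t0 : ℝ) (Q W : ℕ → ℝ)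
    (p : ℕ) : ℝ :=
  deriv (fun s : ℝ => P (Q p + s * W p)
    (bD h (fun i => Q i + s * W i) p)
    (fD h (fun i => Q i + s * W i) p)
    (cD h (fun i => Q i + s * W i) p)
    (t0 + p * h) h) 0

open Finset

namespace DiscreteHelmholtz

local notation "ℝ⁶" => ℝ × ℝ × ℝ × ℝ × ℝ × ℝ

section DifferenceOperator

noncomputable def diffOp (h : ℝ) (a b c d W : ℕ → ℝ) (p : ℕ) : ℝ :=
  a p * W p + b p * bD h W p + c p * fD h W p + d p * cD h W p

def casoratian (W Z : ℕ → ℝ) (p : ℕ) : ℝ := W (p - 1) * Z p - Z (p - 1) * W p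

variable {h : ℝ} {a b c d : ℕ → ℝ}

theorem diffOp_mul_sub_diffOp_mul (W Z : ℕ → ℝ) (p : ℕ) :
    diffOp h a b c d W p * Z p - diffOp h a b c d Z p * W p
      = (d p / h ^ 2 - b p / h) * casoratian W Z p
        - (d p / h ^ 2 + c p / h) * casoratian W Z (p + 1) := by
  simp only [diffOp, casoratian, bD, fD, cD, Nat.add_sub_cancel]
  ring

theorem sum_Icc_mul_sub_mul_succ_eq_zero {R : Type*} [CommRing R] {α β u : ℕ → R} {N : ℕ}
    (hαβ : ∀ p ∈ Icc 2 (N - 1), α p = β (p - 1)) (hu₁ : u 1 = 0) (huN : u N = 0) :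
    ∑ p ∈ Icc 1 (N - 1), (α p * u p - β p * u (p + 1)) = 0 := by
  rcases N.eq_zero_or_pos with rfl | hN
  · simp
  have htel : ∀ p ∈ Icc 1 (N - 1),
      α p * u p - β p * u (p + 1) = -(α (p + 1) * u (p + 1) - α p * u p) := by
    intro p hp
    obtain ⟨hp₁, hpN⟩ := mem_Icc.1 hp
    rcases (by omega : p + 1 ≤ N - 1 ∨ p + 1 = N) with hlt | rfl
    · rw [hαβ (p + 1) (mem_Icc.2 ⟨by omega, hlt⟩), Nat.add_sub_cancel]
      ring
    · rw [huN]
      ring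
  rw [sum_congr rfl htel, sum_neg_distrib, Icc_sub_one_right_eq_Ico_of_not_isMin
    (by simpa using hN.ne'), sum_Ico_sub (fun p => α p * u p) hN, hu₁, huN]
  simp

theorem sub_div_eq_add_iff_div_sq (hh : h ≠ 0) {x y s t : ℝ} :
    (x - y) / h = s + t ↔ y / h ^ 2 + t / h = x / h ^ 2 - s / h := by
  field_simp
  constructor <;> intro H <;> linarith

theorem sum_diffOp_mul_comm (hh : h ≠ 0) {N : ℕ}
    (hH : ∀ p ∈ Icc 2 (N - 1), (d p - d (p - 1)) / h = b p + c (p - 1))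
    {W Z : ℕ → ℝ} (hW₁ : W 1 = 0) (hWN : W N = 0) (hZ₁ : Z 1 = 0) (hZN : Z N = 0) :
    ∑ p ∈ Icc 1 (N - 1), diffOp h a b c d W p * Z p
      = ∑ p ∈ Icc 1 (N - 1), diffOp h a b c d Z p * W p := by
  rw [← sub_eq_zero, ← sum_sub_distrib]
  simp_rw [diffOp_mul_sub_diffOp_mul]
  exact sum_Icc_mul_sub_mul_succ_eq_zero
    (fun p hp => ((sub_div_eq_add_iff_div_sq hh).1 (hH p hp)).symm)
    (by simp [casoratian, hW₁, hZ₁]) (by simp [casoratian, hWN, hZN])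

theorem diffOp_single_succ_apply_self (q : ℕ) :
    diffOp h a b c d (Pi.single (q + 1) 1) q = d q / h ^ 2 + c q / h := by
  have h_self : (Pi.single (q + 1) 1 : ℕ → ℝ) q = 0 := Pi.single_eq_of_ne (by omega) _
  have h_pred : (Pi.single (q + 1) 1 : ℕ → ℝ) (q - 1) = 0 := Pi.single_eq_of_ne (by omega) _
  simp only [diffOp, bD, fD, cD, h_self, h_pred, Pi.single_eq_same]
  ring

theorem diffOp_single_apply_succ (q : ℕ) :
    diffOp h a b c d (Pi.single q 1) (q + 1) = d (q + 1) / h ^ 2 - b (q + 1) / h := by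
  have h_succ : (Pi.single q 1 : ℕ → ℝ) (q + 1) = 0 := Pi.single_eq_of_ne (by omega) _
  have h_succ_succ : (Pi.single q 1 : ℕ → ℝ) (q + 1 + 1) = 0 := Pi.single_eq_of_ne (by omega) _
  simp only [diffOp, bD, fD, cD, Nat.add_sub_cancel, h_succ, h_succ_succ, Pi.single_eq_same]
  ring

theorem sum_mul_single_one {ι R : Type*} [DecidableEq ι] [Semiring R] {s : Finset ι} {q : ι}
    (hq : q ∈ s) (f : ι → R) : ∑ p ∈ s, f p * (Pi.single q 1 : ι → R) p = f q := by
  simp [Pi.single_apply, hq]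

theorem helmholtz_of_sum_diffOp_single (hh : h ≠ 0) {N q : ℕ} (hq : 1 ≤ q) (hqN : q + 2 ≤ N)
    (hsa : ∑ p ∈ Icc 1 (N - 1),
        diffOp h a b c d (Pi.single (q + 1) 1) p * (Pi.single q 1 : ℕ → ℝ) p
      = ∑ p ∈ Icc 1 (N - 1),
        diffOp h a b c d (Pi.single q 1) p * (Pi.single (q + 1) 1 : ℕ → ℝ) p) :
    (d (q + 1) - d q) / h = b (q + 1) + c q := by
  rw [sum_mul_single_one (mem_Icc.2 ⟨hq, by omega⟩),
    sum_mul_single_one (mem_Icc.2 ⟨by omega, by omega⟩),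
    diffOp_single_succ_apply_self, diffOp_single_apply_succ] at hsa
  exact (sub_div_eq_add_iff_div_sq hh).2 hsa

end DifferenceOperator

theorem deriv_eq_lineDeriv {𝕜 E F : Type*} [NontriviallyNormedField 𝕜] [NormedAddCommGroup E]
    [NormedSpace 𝕜 E] [NormedAddCommGroup F] [NormedSpace 𝕜 F] {f : E → F} {g : 𝕜 → F}
    {x v : E} {a : 𝕜} (hg : ∀ t, g (a + t) = f (x + t • v)) :
    deriv g a = lineDeriv 𝕜 f x v := by
  simpa [lineDeriv, ← funext hg] using (deriv_comp_const_add g a 0).symm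

section Linearization

variable {P : ℝ → ℝ → ℝ → ℝ → ℝ → ℝ → ℝ}

def uncurry₆ (P : ℝ → ℝ → ℝ → ℝ → ℝ → ℝ → ℝ) : ℝ⁶ → ℝ :=
  fun v => P v.1 v.2.1 v.2.2.1 v.2.2.2.1 v.2.2.2.2.1 v.2.2.2.2.2

variable {x₁ x₂ x₃ x₄ x₅ x₆ : ℝ}

theorem deriv_slot₂ (hP : DifferentiableAt ℝ (uncurry₆ P) (x₁, x₂, x₃, x₄, x₅, x₆)) :
    deriv (fun y => P x₁ y x₃ x₄ x₅ x₆) x₂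
      = fderiv ℝ (uncurry₆ P) (x₁, x₂, x₃, x₄, x₅, x₆) (0, 1, 0, 0, 0, 0) := by
  rw [← hP.lineDeriv_eq_fderiv]
  exact deriv_eq_lineDeriv fun t => by simp [uncurry₆]

theorem deriv_slot₃ (hP : DifferentiableAt ℝ (uncurry₆ P) (x₁, x₂, x₃, x₄, x₅, x₆)) :
    deriv (fun y => P x₁ x₂ y x₄ x₅ x₆) x₃
      = fderiv ℝ (uncurry₆ P) (x₁, x₂, x₃, x₄, x₅, x₆) (0, 0, 1, 0, 0, 0) := by
  rw [← hP.lineDeriv_eq_fderiv]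
  exact deriv_eq_lineDeriv fun t => by simp [uncurry₆]

theorem deriv_slot₄ (hP : DifferentiableAt ℝ (uncurry₆ P) (x₁, x₂, x₃, x₄, x₅, x₆)) :
    deriv (fun y => P x₁ x₂ x₃ y x₅ x₆) x₄
      = fderiv ℝ (uncurry₆ P) (x₁, x₂, x₃, x₄, x₅, x₆) (0, 0, 0, 1, 0, 0) := by
  rw [← hP.lineDeriv_eq_fderiv]
  exact deriv_eq_lineDeriv fun t => by simp [uncurry₆]

/-- The point `⋆_p`. -/
noncomputable def star (h t0 : ℝ) (Q : ℕ → ℝ) (p : ℕ) : ℝ⁶ :=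
  (Q p, bD h Q p, fD h Q p, cD h Q p, t0 + p * h, h)

noncomputable def jet (h : ℝ) (W : ℕ → ℝ) (p : ℕ) : ℝ⁶ :=
  (W p, bD h W p, fD h W p, cD h W p, 0, 0)

theorem star_add_smul (h t0 : ℝ) (Q W : ℕ → ℝ) (p : ℕ) (s : ℝ) :
    star h t0 (fun i => Q i + s * W i) p = star h t0 Q p + s • jet h W p := by
  simp only [star, jet, bD, fD, cD, Prod.smul_mk, Prod.mk_add_mk, smul_eq_mul]
  ext <;> dsimp only <;> ring

theorem jet_eq (h : ℝ) (W : ℕ → ℝ) (p : ℕ) :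
    jet h W p = W p • (1, 0, 0, 0, 0, 0) + bD h W p • (0, 1, 0, 0, 0, 0)
      + fD h W p • (0, 0, 1, 0, 0, 0) + cD h W p • (0, 0, 0, 1, 0, 0) := by
  simp [jet]

theorem star_shift (h t0 : ℝ) (Q : ℕ → ℝ) (p : ℕ) :
    star h (t0 - h) (fun i => Q (i - 1)) (p + 1) = star h t0 Q p := by
  simp only [star, bD, fD, cD, Nat.add_sub_cancel, Nat.cast_add, Nat.cast_one]
  ring_nf

theorem DP_eq_lineDeriv (h t0 : ℝ) (Q W : ℕ → ℝ) (p : ℕ) :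
    DP P h t0 Q W p = lineDeriv ℝ (uncurry₆ P) (star h t0 Q p) (jet h W p) := by
  change deriv (fun s => uncurry₆ P (star h t0 (fun i => Q i + s * W i) p)) 0 = _
  simp_rw [star_add_smul]
  rfl

noncomputable def coeff (P : ℝ → ℝ → ℝ → ℝ → ℝ → ℝ → ℝ) (v : ℝ⁶) (h t0 : ℝ) (Q : ℕ → ℝ)
    (p : ℕ) : ℝ :=
  fderiv ℝ (uncurry₆ P) (star h t0 Q p) v

theorem DP_eq_diffOp (hP : Differentiable ℝ (uncurry₆ P)) (h t0 : ℝ) (Q W : ℕ → ℝ) (p : ℕ) :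
    DP P h t0 Q W p = diffOp h (coeff P (1, 0, 0, 0, 0, 0) h t0 Q)
      (coeff P (0, 1, 0, 0, 0, 0) h t0 Q) (coeff P (0, 0, 1, 0, 0, 0) h t0 Q)
      (coeff P (0, 0, 0, 1, 0, 0) h t0 Q) W p := by
  rw [DP_eq_lineDeriv, (hP _).lineDeriv_eq_fderiv, jet_eq]
  simp only [map_add, map_smul, smul_eq_mul, diffOp, coeff]
  ring

theorem coeff_shift (v : ℝ⁶) (h t0 : ℝ) (Q : ℕ → ℝ) (p : ℕ) :
    coeff P v h (t0 - h) (fun i => Q (i - 1)) (p + 1) = coeff P v h t0 Q p := by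
  rw [coeff, star_shift, coeff]

theorem helmholtz_iff_coeff (hP : Differentiable ℝ (uncurry₆ P)) (h t0 : ℝ) (Q : ℕ → ℝ) {p : ℕ}
    (hp : 1 ≤ p) :
    (deriv (fun w => P (Q p) (bD h Q p) (fD h Q p) w (t0 + p * h) h) (cD h Q p)
          - deriv (fun w => P (Q (p - 1)) (bD h Q (p - 1)) (fD h Q (p - 1)) w
              (t0 + ((p : ℝ) - 1) * h) h) (cD h Q (p - 1))) / h
        = deriv (fun vm => P (Q p) vm (fD h Q p) (cD h Q p) (t0 + p * h) h) (bD h Q p)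
          + deriv (fun vp => P (Q (p - 1)) (bD h Q (p - 1)) vp (cD h Q (p - 1))
              (t0 + ((p : ℝ) - 1) * h) h) (fD h Q (p - 1))
      ↔ (coeff P (0, 0, 0, 1, 0, 0) h t0 Q p - coeff P (0, 0, 0, 1, 0, 0) h t0 Q (p - 1)) / h
        = coeff P (0, 1, 0, 0, 0, 0) h t0 Q p + coeff P (0, 0, 1, 0, 0, 0) h t0 Q (p - 1) := by
  rw [← Nat.cast_pred hp, deriv_slot₂ (hP _), deriv_slot₃ (hP _), deriv_slot₄ (hP _),
    deriv_slot₄ (hP _)]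
  rfl

end Linearization

end DiscreteHelmholtz

open DiscreteHelmholtz in
/-- The Fréchet derivatives of a second order finite differences operator are all
self-adjoint if and only if the operator satisfies the discrete Helmholtz condition. -/
theorem selfadjoint_iff_discrete_helmholtz (P : ℝ → ℝ → ℝ → ℝ → ℝ → ℝ → ℝ)
    (hP : ContDiff ℝ 1 (fun v : ℝ × ℝ × ℝ × ℝ × ℝ × ℝ =>
      P v.1 v.2.1 v.2.2.1 v.2.2.2.1 v.2.2.2.2.1 v.2.2.2.2.2)) :
    (∀ (h : ℝ), 0 < h → ∀ (t0 : ℝ) (N : ℕ), 4 ≤ N → ∀ Q W Z : ℕ → ℝ,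
      W 0 = 0 → W 1 = 0 → W (N - 1) = 0 → W N = 0 →
      Z 0 = 0 → Z 1 = 0 → Z (N - 1) = 0 → Z N = 0 →
      h * ∑ p ∈ Finset.Icc 1 (N - 1), DP P h t0 Q W p * Z p
        = h * ∑ p ∈ Finset.Icc 1 (N - 1), DP P h t0 Q Z p * W p)
    ↔ (∀ (h : ℝ), 0 < h → ∀ (t0 : ℝ) (N : ℕ), 4 ≤ N → ∀ Q : ℕ → ℝ,
        ∀ p ∈ Finset.Icc 2 (N - 1),
        (deriv (fun w => P (Q p) (bD h Q p) (fD h Q p) w (t0 + p * h) h) (cD h Q p)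
          - deriv (fun w => P (Q (p - 1)) (bD h Q (p - 1)) (fD h Q (p - 1)) w
              (t0 + ((p : ℝ) - 1) * h) h) (cD h Q (p - 1))) / h
        = deriv (fun vm => P (Q p) vm (fD h Q p) (cD h Q p) (t0 + p * h) h) (bD h Q p)
          + deriv (fun vp => P (Q (p - 1)) (bD h Q (p - 1)) vp (cD h Q (p - 1))
              (t0 + ((p : ℝ) - 1) * h) h) (fD h Q (p - 1))) := by
  have hF : Differentiable ℝ (uncurry₆ P) := hP.differentiable one_ne_zero
  constructor
  · intro hsa h hh t0 N hN Q p hp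
    have hp₂ : 2 ≤ p := (mem_Icc.1 hp).1
    obtain ⟨q, rfl⟩ : ∃ q, p = q + 1 := ⟨p - 1, by omega⟩
    rw [helmholtz_iff_coeff hF h t0 Q (by omega), Nat.add_sub_cancel]
    -- Shifting the grid by one step moves the indices `q`, `q + 1` to `q + 1`, `q + 2`, which
    -- are interior to a grid of size `q + 4`: the unit vectors there are admissible.
    have hsa' := hsa h hh (t0 - h) (q + 4) (by omega) (fun i => Q (i - 1))
      (Pi.single (q + 2) 1) (Pi.single (q + 1) 1)
      ?_ ?_ ?_ ?_ ?_ ?_ ?_ ?_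
    simp only [DP_eq_diffOp hF] at hsa'
    have := helmholtz_of_sum_diffOp_single hh.ne' (by omega) (by omega)
      (mul_left_cancel₀ hh.ne' hsa')
    · simpa only [coeff_shift] using this
    all_goals apply Pi.single_eq_of_ne; omega
  · intro hH h hh t0 N hN Q W Z _ hW₁ _ hWN _ hZ₁ _ hZN
    simp only [DP_eq_diffOp hF]
    rw [sum_diffOp_mul_comm hh.ne'
      (fun p hp => (helmholtz_iff_coeff hF h t0 Q (by grind)).1 (hH h hh t0 N hN Q p hp))
      hW₁ hWN hZ₁ hZN]
end

section
/- Let L₋, L₊ : ℝ³ × ℝ₊* → ℝ be C¹ Lagrangians, and suppose there exist f : ℝ² × ℝ₊* → ℝ and g : ℝ × ℝ₊* → ℝ such that for every h > 0, every N ≥ 4, every t_0 ∈ ℝ, every Q ∈ ℝ^{N+1} and every p = 1,…,N: L₋(Q_p,(Δ₋Q)_p,t_p,h) + L₊(Q_{p-1},(-Δ₊Q)_{p-1},t_{p-1},h) = (f(Q_p,t_p,h) − f(Q_{p-1},t_{p-1},h))/h + g(t_p,h). Then (L₋,L₊) is a null couple of Lagrangians: the associated second order discrete Euler-Lagrange equation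 ∂L₋/∂x(∗_p) + ∂L₊/∂x(∗∗_p) + (Δ₊(∂L₋/∂v(∗)))_p − (Δ₋(∂L₊/∂v(∗∗)))_p = 0 holds for every Q ∈ ℝ^{N+1} and every p = 1,…,N-1. -/
theorem bD_succ (h : ℝ) (Q : ℕ → ℝ) (p : ℕ) : bD h Q (p + 1) = fD h Q p := by
  rw [bD, fD, Nat.add_sub_cancel]

theorem fD_pred (h : ℝ) (Q : ℕ → ℝ) {p : ℕ} (hp : 1 ≤ p) : fD h Q (p - 1) = bD h Q p := by
  rw [bD, fD, Nat.sub_add_cancel hp]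

section PartialDerivatives

variable {L : ℝ → ℝ → ℝ → ℝ → ℝ}

theorem hasDerivAt_comp_uncurry_fderiv
    (hL : Differentiable ℝ (fun v : ℝ × ℝ × ℝ × ℝ => L v.1 v.2.1 v.2.2.1 v.2.2.2))
    {u w : ℝ → ℝ} {u' w' x : ℝ} (t s : ℝ) (hu : HasDerivAt u u' x) (hw : HasDerivAt w w' x) :
    HasDerivAt (fun y => L (u y) (w y) t s)
      (fderiv ℝ (fun v : ℝ × ℝ × ℝ × ℝ => L v.1 v.2.1 v.2.2.1 v.2.2.2) (u x, w x, t, s)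
        (u', w', 0, 0)) x :=
  (hL _).hasFDerivAt.comp_hasDerivAt x
    (hu.prodMk (hw.prodMk ((hasDerivAt_const x t).prodMk (hasDerivAt_const x s))))

theorem hasDerivAt_comp_partialDeriv
    (hL : Differentiable ℝ (fun v : ℝ × ℝ × ℝ × ℝ => L v.1 v.2.1 v.2.2.1 v.2.2.2))
    {u w : ℝ → ℝ} {u' w' x : ℝ} (t s : ℝ) (hu : HasDerivAt u u' x) (hw : HasDerivAt w w' x) :
    HasDerivAt (fun y => L (u y) (w y) t s)
      (u' * deriv (fun y => L y (w x) t s) (u x) + w' * deriv (fun v => L (u x) v t s) (w x)) x := by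
  set D := fderiv ℝ (fun v : ℝ × ℝ × ℝ × ℝ => L v.1 v.2.1 v.2.2.1 v.2.2.2) (u x, w x, t, s)
  have hx : deriv (fun y => L y (w x) t s) (u x) = D (1, 0, 0, 0) :=
    (hasDerivAt_comp_uncurry_fderiv hL t s (hasDerivAt_id' (u x))
      (hasDerivAt_const (u x) (w x))).deriv
  have hv : deriv (fun v => L (u x) v t s) (w x) = D (0, 1, 0, 0) :=
    (hasDerivAt_comp_uncurry_fderiv hL t s (hasDerivAt_const (w x) (u x))
      (hasDerivAt_id' (w x))).deriv
  have hlin : D (u', w', 0, 0) = u' * D (1, 0, 0, 0) + w' * D (0, 1, 0, 0) := by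
    rw [← smul_eq_mul, ← smul_eq_mul, ← map_smul, ← map_smul, ← map_add]
    simp
  rw [hx, hv, ← hlin]
  exact hasDerivAt_comp_uncurry_fderiv hL t s hu hw

end PartialDerivatives

section DiscreteAction

variable (Lm Lp : ℝ → ℝ → ℝ → ℝ → ℝ) (h : ℝ)

/-- `Lm(∗_p) + Lp(∗∗_{p-1})` in terms of `y = Q_p`, `z = Q_{p-1}` and `s = t_p`. -/
noncomputable def pairLagrangian (y z s : ℝ) : ℝ :=
  Lm y ((y - z) / h) s h + Lp z ((y - z) / h) (s - h) h

/-- The terms of the discrete action that contain `x = Q_p`, where `a = Q_{p-1}`, `b = Q_{p+1}`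
and `t = t_p`. -/
noncomputable def localAction (a b t x : ℝ) : ℝ :=
  pairLagrangian Lm Lp h x a t + pairLagrangian Lm Lp h b x (t + h)

theorem pairLagrangian_eq_of_sequence (Q : ℕ → ℝ) (t0 : ℝ) {p : ℕ} (hp : 1 ≤ p) :
    pairLagrangian Lm Lp h (Q p) (Q (p - 1)) (t0 + p * h)
      = Lm (Q p) (bD h Q p) (t0 + p * h) h
        + Lp (Q (p - 1)) (fD h Q (p - 1)) (t0 + ((p : ℝ) - 1) * h) h := by
  rw [pairLagrangian, bD, fD, Nat.sub_add_cancel hp, sub_one_mul, add_sub_assoc]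

variable {Lm Lp h}

theorem pairLagrangian_eq_of_forall_sequence {f : ℝ → ℝ → ℝ → ℝ} {g : ℝ → ℝ → ℝ} {t0 : ℝ}
    {p : ℕ} (hp : 1 ≤ p)
    (hfg : ∀ Q : ℕ → ℝ, Lm (Q p) (bD h Q p) (t0 + p * h) h
        + Lp (Q (p - 1)) (fD h Q (p - 1)) (t0 + ((p : ℝ) - 1) * h) h
      = (f (Q p) (t0 + p * h) h - f (Q (p - 1)) (t0 + ((p : ℝ) - 1) * h) h) / h
        + g (t0 + p * h) h)
    (y z : ℝ) :
    pairLagrangian Lm Lp h y z (t0 + p * h)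
      = (f y (t0 + p * h) h - f z (t0 + p * h - h) h) / h + g (t0 + p * h) h := by
  set Q : ℕ → ℝ := Function.update (fun _ => z) p y
  have hQp : Q p = y := Function.update_self p y (fun _ => z)
  have hQpred : Q (p - 1) = z := Function.update_of_ne (by omega) y (fun _ => z)
  have hpred : t0 + ((p : ℝ) - 1) * h = t0 + p * h - h := by ring
  have := hfg Q
  rwa [← pairLagrangian_eq_of_sequence _ _ _ _ _ hp, hQp, hQpred, hpred] at this

theorem localAction_eq {f : ℝ → ℝ → ℝ → ℝ} {g : ℝ → ℝ → ℝ} {t : ℝ}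
    (hpair : ∀ s ∈ ({t, t + h} : Set ℝ), ∀ y z,
      pairLagrangian Lm Lp h y z s = (f y s h - f z (s - h) h) / h + g s h)
    (a b x : ℝ) :
    localAction Lm Lp h a b t x = (f b (t + h) h - f a (t - h) h) / h + g t h + g (t + h) h := by
  rw [localAction, hpair t (by simp), hpair (t + h) (by simp), add_sub_cancel_right]
  ring

theorem hasDerivAt_localAction
    (hLm : Differentiable ℝ (fun v : ℝ × ℝ × ℝ × ℝ => Lm v.1 v.2.1 v.2.2.1 v.2.2.2))
    (hLp : Differentiable ℝ (fun v : ℝ × ℝ × ℝ × ℝ => Lp v.1 v.2.1 v.2.2.1 v.2.2.2))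
    (a b t x : ℝ) :
    HasDerivAt (localAction Lm Lp h a b t)
      (deriv (fun y => Lm y ((x - a) / h) t h) x + deriv (fun y => Lp y ((b - x) / h) t h) x
        + (deriv (fun v => Lm x v t h) ((x - a) / h)
            - deriv (fun v => Lm b v (t + h) h) ((b - x) / h)) / h
        - (deriv (fun v => Lp x v t h) ((b - x) / h)
            - deriv (fun v => Lp a v (t - h) h) ((x - a) / h)) / h) x := by
  have hback : HasDerivAt (fun y => (y - a) / h) (1 / h) x :=
    ((hasDerivAt_id' x).sub_const a).div_const h
  have hfwd : HasDerivAt (fun y => (b - y) / h) ((0 - 1) / h) x :=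
    ((hasDerivAt_const x b).sub (hasDerivAt_id' x)).div_const h
  have hsum :=
    (((hasDerivAt_comp_partialDeriv hLm t h (hasDerivAt_id' x) hback).add
      (hasDerivAt_comp_partialDeriv hLp (t - h) h (hasDerivAt_const x a) hback)).add
      (hasDerivAt_comp_partialDeriv hLm (t + h) h (hasDerivAt_const x b) hfwd)).add
      (hasDerivAt_comp_partialDeriv hLp t h (hasDerivAt_id' x) hfwd)
  have hsplit : localAction Lm Lp h a b t = fun y => Lm y ((y - a) / h) t h
      + Lp a ((y - a) / h) (t - h) h + Lm b ((b - y) / h) (t + h) h + Lp y ((b - y) / h) t h := by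
    funext y
    rw [localAction, pairLagrangian, pairLagrangian, add_sub_cancel_right]
    ring
  rw [hsplit]
  exact hsum.congr_deriv (by ring)

end DiscreteAction

/-- If the couple of Lagrangians combines pointwise into a discrete total
derivative plus a function of time, then it is a null couple of Lagrangians:
the discrete Euler-Lagrange equation holds identically. -/
theorem null_lagrangian_sufficiency (Lm Lp : ℝ → ℝ → ℝ → ℝ → ℝ)
    (hLm : ContDiff ℝ 1 (fun v : ℝ × ℝ × ℝ × ℝ => Lm v.1 v.2.1 v.2.2.1 v.2.2.2))
    (hLp : ContDiff ℝ 1 (fun v : ℝ × ℝ × ℝ × ℝ => Lp v.1 v.2.1 v.2.2.1 v.2.2.2))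
    (f : ℝ → ℝ → ℝ → ℝ) (g : ℝ → ℝ → ℝ)
    (hfg : ∀ (h : ℝ), 0 < h → ∀ (N : ℕ), 4 ≤ N → ∀ (t0 : ℝ) (Q : ℕ → ℝ),
      ∀ p ∈ Finset.Icc 1 N,
      Lm (Q p) (bD h Q p) (t0 + p * h) h
        + Lp (Q (p - 1)) (fD h Q (p - 1)) (t0 + ((p : ℝ) - 1) * h) h
      = (f (Q p) (t0 + p * h) h - f (Q (p - 1)) (t0 + ((p : ℝ) - 1) * h) h) / h
        + g (t0 + p * h) h) :
    ∀ (h : ℝ), 0 < h → ∀ (N : ℕ), 4 ≤ N → ∀ (t0 : ℝ) (Q : ℕ → ℝ),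
      ∀ p ∈ Finset.Icc 1 (N - 1),
      deriv (fun x => Lm x (bD h Q p) (t0 + p * h) h) (Q p)
      + deriv (fun x => Lp x (fD h Q p) (t0 + p * h) h) (Q p)
      + (deriv (fun v => Lm (Q p) v (t0 + p * h) h) (bD h Q p)
          - deriv (fun v => Lm (Q (p + 1)) v (t0 + (p + 1 : ℕ) * h) h) (bD h Q (p + 1))) / h
      - (deriv (fun v => Lp (Q p) v (t0 + p * h) h) (fD h Q p)
          - deriv (fun v => Lp (Q (p - 1)) v (t0 + ((p : ℝ) - 1) * h) h) (fD h Q (p - 1))) / h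
      = 0 := by
  intro h hh N hN t0 Q p hp
  obtain ⟨hp1, hpN⟩ := Finset.mem_Icc.mp hp
  have hsucc : t0 + ((p + 1 : ℕ) : ℝ) * h = t0 + p * h + h := by push_cast; ring
  have hpred : t0 + ((p : ℝ) - 1) * h = t0 + p * h - h := by ring
  have hpair : ∀ s ∈ ({t0 + p * h, t0 + p * h + h} : Set ℝ), ∀ y z,
      pairLagrangian Lm Lp h y z s = (f y s h - f z (s - h) h) / h + g s h := by
    rintro s (rfl | rfl)
    · exact pairLagrangian_eq_of_forall_sequence hp1
        (fun Q => hfg h hh N hN t0 Q p (Finset.mem_Icc.mpr ⟨hp1, by omega⟩))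
    · rw [← hsucc]
      exact pairLagrangian_eq_of_forall_sequence (Nat.le_add_left 1 p)
        (fun Q => hfg h hh N hN t0 Q (p + 1) (Finset.mem_Icc.mpr ⟨by omega, by omega⟩))
  have hderiv := hasDerivAt_localAction (h := h) (hLm.differentiable one_ne_zero)
    (hLp.differentiable one_ne_zero) (Q (p - 1)) (Q (p + 1)) (t0 + p * h) (Q p)
  rw [funext (localAction_eq hpair (Q (p - 1)) (Q (p + 1)))] at hderiv
  rw [bD_succ, fD_pred h Q hp1, hsucc, hpred]
  exact hderiv.unique (hasDerivAt_const _ _)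
end

section
/- Let h > 0 and consider the operator P̄(x,v₋,v₊,w,t,ξ) = x + sin((1-λ)v₋ + λv₊)·w with λ = 1/2 (direct centered discretization of q + sin(q̇)q̈ = 0). Then P̄ does not satisfy the discrete Helmholtz condition: there exist N ≥ 4, Q ∈ ℝ^{N+1}, and p with 2 ≤ p ≤ N-1 such that (Δ₋(∂P̄/∂w(⋆)))_p ≠ ∂P̄/∂v₋(⋆_p) + ∂P̄/∂v₊(⋆_{p-1}), where ⋆_p = (Q_p,(Δ₋Q)_p,(-Δ₊Q)_p,(-Δ₊∘Δ₋Q)_p,t_p,h). -/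
/-- The operator of the direct centered discretization (`λ = 1/2`) of
`q + sin(q̇) q̈ = 0`. -/
noncomputable def Psin (x vm vp w t ξ : ℝ) : ℝ :=
  x + Real.sin ((1 - (1/2 : ℝ)) * vm + (1/2 : ℝ) * vp) * w

/-! Take `Q` vanishing except for `Q₀ = -π h` and `p = 2`. At `p` all differences vanish,
while at `p - 1` the mean velocity is `π / 2`: there `sin` is maximal and `cos` vanishes,
so the left side is `-1 / h` and the right side is `0`. -/

open Real

lemma Psin_eq (x vm vp w t ξ : ℝ) : Psin x vm vp w t ξ = x + sin ((vm + vp) / 2) * w := by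
  unfold Psin
  ring_nf

lemma deriv_Psin_w (x vm vp t ξ w : ℝ) :
    deriv (fun w => Psin x vm vp w t ξ) w = sin ((vm + vp) / 2) := by
  simp [Psin_eq]

lemma deriv_Psin_vm (x vm vp w t ξ : ℝ) :
    deriv (fun vm => Psin x vm vp w t ξ) vm = cos ((vm + vp) / 2) / 2 * w := by
  simp only [Psin_eq]
  exact ((((hasDerivAt_id' vm).add_const vp).div_const 2).sin.mul_const w).const_add x
    |>.deriv.trans (by ring)

lemma deriv_Psin_vp (x vm vp w t ξ : ℝ) :
    deriv (fun vp => Psin x vm vp w t ξ) vp = cos ((vm + vp) / 2) / 2 * w := by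
  simp only [Psin_eq]
  exact ((((hasDerivAt_id' vp).const_add vm).div_const 2).sin.mul_const w).const_add x
    |>.deriv.trans (by ring)

/-- The direct centered discretization of `q + sin(q̇) q̈ = 0` does not satisfy
the discrete Helmholtz condition. -/
theorem direct_discretization_not_helmholtz (h : ℝ) (hh : 0 < h) :
    ∃ (N : ℕ), 4 ≤ N ∧ ∃ (Q : ℕ → ℝ) (t0 : ℝ) (p : ℕ), 2 ≤ p ∧ p ≤ N - 1 ∧
      (deriv (fun w => Psin (Q p) (bD h Q p) (fD h Q p) w (t0 + p * h) h) (cD h Q p)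
        - deriv (fun w => Psin (Q (p - 1)) (bD h Q (p - 1)) (fD h Q (p - 1)) w
            (t0 + ((p : ℝ) - 1) * h) h) (cD h Q (p - 1))) / h
      ≠ deriv (fun vm => Psin (Q p) vm (fD h Q p) (cD h Q p) (t0 + p * h) h) (bD h Q p)
        + deriv (fun vp => Psin (Q (p - 1)) (bD h Q (p - 1)) vp (cD h Q (p - 1))
            (t0 + ((p : ℝ) - 1) * h) h) (fD h Q (p - 1)) := by
  set Q : ℕ → ℝ := fun n => if n = 0 then -(π * h) else 0
  refine ⟨4, le_rfl, Q, 0, 2, le_rfl, by norm_num, ?_⟩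
  have hb1 : bD h Q 1 = π := by simp [bD, Q, hh.ne']
  have hf1 : fD h Q 1 = 0 := by simp [fD, Q]
  have hc1 : cD h Q 1 = -(π / h) := by simp [cD, Q, sq, neg_div, mul_div_mul_right, hh.ne']
  have hb2 : bD h Q 2 = 0 := by simp [bD, Q]
  have hf2 : fD h Q 2 = 0 := by simp [fD, Q]
  have hc2 : cD h Q 2 = 0 := by simp [cD, Q]
  simp only [deriv_Psin_w, deriv_Psin_vm, deriv_Psin_vp, Nat.add_one_sub_one,
    hb1, hf1, hc1, hb2, hf2, hc2]
  norm_num [hh.ne']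
end
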